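/- (No singular vectors at odd level ≥ 3, from the proof of Theorem 3.3) For every positive integer n and all α, β ∈ ℂ, if the vector v = α·e(n,1,0) + β·e(n,0,1) satisfies A₋v = c₊v = c₋v = 0, then α = β = 0. Consequently there is no singular vector at any odd level 2n+1 with n ≥ 1. -/

import Mathlib

/-!
Verma module `M(h,f)` over the ℤ₂×ℤ₂ graded superalgebra of Rittenberg–Wyler,
realized on the space of finitely supported functions `ℕ × Fin 2 × Fin 2 →₀ ℂ`,
with basis vectors `e k μ ν`.
-/

noncomputable section

/-- Index set for the basis of the Verma module. -/
abbrev Idx : Type := ℕ × Fin 2 × Fin 2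

/-- The underlying space of the Verma module `M(h,f)`. -/
abbrev Mmod : Type := Idx →₀ ℂ

/-- The standard basis vector `e(k,μ,ν)`. -/
def e (k : ℕ) (μ ν : Fin 2) : Mmod := Finsupp.single (k, μ, ν) 1

/-- Build a linear operator on `Mmod` from its values on basis vectors. -/
def mkOp (φ : Idx → Mmod) : Mmod →ₗ[ℂ] Mmod := Finsupp.lift Mmod ℂ Idx φ

/-- The lowering operator `A₋`.
`A₋ e(k,μ,ν) = 4k(h+k+μ+ν−1)·e(k−1,μ,ν) + 4(h+f)·δ_{μ,1}δ_{ν,1}·e(k,0,0)`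
(with the convention `e(−1,μ,ν) = 0`, automatic since the coefficient vanishes at `k = 0`). -/
def Am (h f : ℂ) : Mmod →ₗ[ℂ] Mmod :=
  mkOp fun p =>
    (4 * (p.1 : ℂ) * (h + (p.1 : ℂ) + ((p.2.1 : ℕ) : ℂ) + ((p.2.2 : ℕ) : ℂ) - 1))
        • e (p.1 - 1) p.2.1 p.2.2
    + (if p.2.1 = 1 ∧ p.2.2 = 1 then (4 * (h + f)) • e p.1 0 0 else 0)

/-- The lowering operator `c₊`.
`c₊ e(k,μ,ν) = 2(h+2k+2ν−f)·δ_{μ,1}·e(k,0,ν) + (−1)^μ·2k·δ_{ν,0}·e(k−1,μ,1)`. -/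
def cp (h f : ℂ) : Mmod →ₗ[ℂ] Mmod :=
  mkOp fun p =>
    (if p.2.1 = 1 then
        (2 * (h + 2 * (p.1 : ℂ) + 2 * ((p.2.2 : ℕ) : ℂ) - f)) • e p.1 0 p.2.2 else 0)
    + (if p.2.2 = 0 then
        ((-1 : ℂ) ^ (p.2.1 : ℕ) * (2 * (p.1 : ℂ))) • e (p.1 - 1) p.2.1 1 else 0)

/-- The lowering operator `c₋`.
`c₋ e(k,μ,ν) = (−1)^μ·2(h+f)·δ_{ν,1}·e(k,μ,0) + 2k·δ_{μ,0}·e(k−1,1,ν)`. -/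
def cm (h f : ℂ) : Mmod →ₗ[ℂ] Mmod :=
  mkOp fun p =>
    (if p.2.2 = 1 then
        ((-1 : ℂ) ^ (p.2.1 : ℕ) * (2 * (h + f))) • e p.1 p.2.1 0 else 0)
    + (if p.2.1 = 0 then (2 * (p.1 : ℂ)) • e (p.1 - 1) 1 p.2.2 else 0)

/-- The raising operator `A₊`: `A₊ e(k,μ,ν) = e(k+1,μ,ν)`. -/
def Ap : Mmod →ₗ[ℂ] Mmod := mkOp fun p => e (p.1 + 1) p.2.1 p.2.2

/-- The raising operator `d₊`: `d₊ e(k,μ,ν) = δ_{μ,0}·e(k,1,ν)`. -/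
def dp : Mmod →ₗ[ℂ] Mmod := mkOp fun p => if p.2.1 = 0 then e p.1 1 p.2.2 else 0

/-- The raising operator `d₋`:
`d₋ e(k,μ,ν) = (−1)^μ·δ_{ν,0}·e(k,μ,1) + 2·δ_{μ,1}·e(k+1,0,ν)`. -/
def dm : Mmod →ₗ[ℂ] Mmod :=
  mkOp fun p =>
    (if p.2.2 = 0 then ((-1 : ℂ) ^ (p.2.1 : ℕ)) • e p.1 p.2.1 1 else 0)
    + (if p.2.1 = 1 then (2 : ℂ) • e (p.1 + 1) 0 p.2.2 else 0)

/-- The Cartan operator `N`: `N e(k,μ,ν) = (h+2k+μ+ν)·e(k,μ,ν)`. -/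
def Nop (h : ℂ) : Mmod →ₗ[ℂ] Mmod :=
  mkOp fun p =>
    (h + 2 * (p.1 : ℂ) + ((p.2.1 : ℕ) : ℂ) + ((p.2.2 : ℕ) : ℂ)) • e p.1 p.2.1 p.2.2

/-- The Cartan operator `F̃`: `F̃ e(k,μ,ν) = (f+μ−ν)·e(k,μ,ν)`. -/
def Fop (f : ℂ) : Mmod →ₗ[ℂ] Mmod :=
  mkOp fun p =>
    (f + ((p.2.1 : ℕ) : ℂ) - ((p.2.2 : ℕ) : ℂ)) • e p.1 p.2.1 p.2.2

/-- The set of basis vectors of level `m` (the level of `e(k,μ,ν)` is `2k+μ+ν`). -/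
def levelVecs (m : ℕ) : Set Mmod :=
  {v | ∃ (k : ℕ) (μ ν : Fin 2), 2 * k + (μ : ℕ) + (ν : ℕ) = m ∧ v = e k μ ν}

/-- `v` is a singular vector at level `m ≥ 1`: it is nonzero, lies in the span of the
level-`m` basis vectors, and is annihilated by `A₋`, `c₊` and `c₋`. -/
def IsSingular (h f : ℂ) (m : ℕ) (v : Mmod) : Prop :=
  1 ≤ m ∧ v ≠ 0 ∧ v ∈ Submodule.span ℂ (levelVecs m) ∧
    Am h f v = 0 ∧ cp h f v = 0 ∧ cm h f v = 0

/-! On `α·e(n,1,0) + β·e(n,0,1)`, the operator `c₊` kills `e(n,0,1)` and `c₋` kills `e(n,1,0)`,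
while their other images have coefficient `∓2n` on `e(n-1,1,1)`; for `n ≥ 1` this forces
`α = β = 0`. Level `2n+1` is spanned by exactly these two basis vectors. -/

lemma mkOp_e (φ : Idx → Mmod) (k : ℕ) (μ ν : Fin 2) :
    mkOp φ (e k μ ν) = φ (k, μ, ν) := by
  simp [mkOp, e, Finsupp.lift_apply, Finsupp.sum_single_index]

section LoweringOnOddLevel

variable (h f : ℂ) (n : ℕ)

lemma cp_e_zero_one : cp h f (e n 0 1) = 0 := by
  simp [cp, mkOp_e]

lemma cm_e_one_zero : cm h f (e n 1 0) = 0 := by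
  simp [cm, mkOp_e]

lemma cp_e_one_zero_apply : cp h f (e n 1 0) (n - 1, 1, 1) = -(2 * n) := by
  rw [cp, mkOp_e]
  simp [e]

lemma cm_e_zero_one_apply : cm h f (e n 0 1) (n - 1, 1, 1) = 2 * n := by
  rw [cm, mkOp_e]
  simp [e]

variable {n} {α β : ℂ}

lemma eq_zero_of_cp_eq_zero (hn : n ≠ 0)
    (hcp : cp h f (α • e n 1 0 + β • e n 0 1) = 0) : α = 0 := by
  have hcoeff := congrArg (· (n - 1, 1, 1)) hcp
  simp only [map_add, map_smul, cp_e_zero_one, Finsupp.add_apply, Finsupp.smul_apply,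
    cp_e_one_zero_apply] at hcoeff
  simpa [hn] using hcoeff

lemma eq_zero_of_cm_eq_zero (hn : n ≠ 0)
    (hcm : cm h f (α • e n 1 0 + β • e n 0 1) = 0) : β = 0 := by
  have hcoeff := congrArg (· (n - 1, 1, 1)) hcm
  simp only [map_add, map_smul, cm_e_one_zero, Finsupp.add_apply, Finsupp.smul_apply,
    cm_e_zero_one_apply] at hcoeff
  simpa [hn] using hcoeff

end LoweringOnOddLevel

lemma levelVecs_two_mul_add_one (n : ℕ) : levelVecs (2 * n + 1) = {e n 1 0, e n 0 1} := by
  ext v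
  constructor
  · rintro ⟨k, μ, ν, hk, rfl⟩
    fin_cases μ <;> fin_cases ν <;> simp only [Set.mem_insert_iff, Set.mem_singleton_iff] <;>
      first | omega | (obtain rfl : k = n := by simp at hk; omega); simp
  · rintro (rfl | rfl)
    · exact ⟨n, 1, 0, by simp, rfl⟩
    · exact ⟨n, 0, 1, by simp, rfl⟩

/-- No singular vectors at odd level `2n+1 ≥ 3` (from the proof of Theorem 3.3):
if `v = α·e(n,1,0) + β·e(n,0,1)` with `n ≥ 1` is annihilated by `A₋`, `c₊`, `c₋`,
then `α = β = 0`; consequently there is no singular vector at any odd level `2n+1`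
with `n ≥ 1`. -/
theorem no_singular_vector_odd_level (h f : ℂ) :
    (∀ n : ℕ, 1 ≤ n → ∀ α β : ℂ,
      (Am h f (α • e n 1 0 + β • e n 0 1) = 0 ∧
       cp h f (α • e n 1 0 + β • e n 0 1) = 0 ∧
       cm h f (α • e n 1 0 + β • e n 0 1) = 0) → α = 0 ∧ β = 0) ∧
    (∀ n : ℕ, 1 ≤ n → ∀ v : Mmod, ¬ IsSingular h f (2 * n + 1) v) := by
  have coeffs_eq_zero : ∀ n : ℕ, 1 ≤ n → ∀ α β : ℂ,
      cp h f (α • e n 1 0 + β • e n 0 1) = 0 → cm h f (α • e n 1 0 + β • e n 0 1) = 0 →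
        α = 0 ∧ β = 0 := fun n hn _ _ hcp hcm =>
    ⟨eq_zero_of_cp_eq_zero h f (by omega) hcp, eq_zero_of_cm_eq_zero h f (by omega) hcm⟩
  refine ⟨fun n hn α β ⟨_, hcp, hcm⟩ => coeffs_eq_zero n hn α β hcp hcm, ?_⟩
  rintro n hn v ⟨-, hv, hspan, -, hcp, hcm⟩
  rw [levelVecs_two_mul_add_one, Submodule.mem_span_pair] at hspan
  obtain ⟨α, β, rfl⟩ := hspan
  obtain ⟨rfl, rfl⟩ := coeffs_eq_zero n hn α β hcp hcm
  simp at hv
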